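/- arXiv:2305.08132 — 2 statements merged into one kernel-verified Lean document; each statement's English description precedes it below -/
import Mathlib

section
/- The plactic ideal I_plac of U = ℚ⟨u_1,...,u_N⟩, generated by u_a u_c u_b - u_c u_a u_b for a ≤ b < c and u_b u_a u_c - u_b u_c u_a for a < b ≤ c, satisfies the commutation relation: e_k(u) e_ℓ(u) ≡ e_ℓ(u) e_k(u) mod I_plac for all k, ℓ ≥ 1. -/
open scoped Classical

/-- The noncommutative elementary symmetric function
`e_k(u) = Σ_{i_1 > ⋯ > i_k} u_{i_1} ⋯ u_{i_k}` in the free associative algebra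
`U = ℚ⟨u_1, …, u_N⟩`. -/
noncomputable def eU (N k : ℕ) : FreeAlgebra ℚ (Fin N) :=
  ∑ w ∈ Finset.univ.filter (fun w : Fin k → Fin N => ∀ i j : Fin k, i < j → w j < w i),
    (List.ofFn fun i => FreeAlgebra.ι ℚ (w i)).prod

/-- The sum `Σ_{i_1 ≤ ⋯ ≤ i_k} u_{i_1} ⋯ u_{i_k}` over weakly increasing words. -/
noncomputable def hUmono (N k : ℕ) : FreeAlgebra ℚ (Fin N) :=
  ∑ w ∈ Finset.univ.filter (fun w : Fin k → Fin N => ∀ i j : Fin k, i ≤ j → w i ≤ w j),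
    (List.ofFn fun i => FreeAlgebra.ι ℚ (w i)).prod

/-- The noncommutative complete homogeneous symmetric function, defined
inductively by `h_k(u) = e_1(u) h_{k-1}(u) - e_2(u) h_{k-2}(u) + ⋯ + (-1)^{k-1} e_k(u)`,
with `h_0(u) = 1`. -/
noncomputable def hU (N : ℕ) : ℕ → FreeAlgebra ℚ (Fin N)
  | 0 => 1
  | (k + 1) =>
      ∑ i ∈ Finset.range (k + 1), ((-1 : ℚ) ^ i) • (eU N (i + 1) * hU N (k - i))
  termination_by k => k
  decreasing_by omega

/-- The plactic ideal of `U = ℚ⟨u_1,…,u_N⟩`: the two-sided ideal generated by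
`u_a u_c u_b - u_c u_a u_b` (`a ≤ b < c`) and `u_b u_a u_c - u_b u_c u_a`
(`a < b ≤ c`). -/
noncomputable def Iplac (N : ℕ) : TwoSidedIdeal (FreeAlgebra ℚ (Fin N)) :=
  TwoSidedIdeal.span
    ({z | ∃ a b c : Fin N, a ≤ b ∧ b < c ∧
        z = FreeAlgebra.ι ℚ a * FreeAlgebra.ι ℚ c * FreeAlgebra.ι ℚ b
          - FreeAlgebra.ι ℚ c * FreeAlgebra.ι ℚ a * FreeAlgebra.ι ℚ b} ∪
     {z | ∃ a b c : Fin N, a < b ∧ b ≤ c ∧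
        z = FreeAlgebra.ι ℚ b * FreeAlgebra.ι ℚ a * FreeAlgebra.ι ℚ c
          - FreeAlgebra.ι ℚ b * FreeAlgebra.ι ℚ c * FreeAlgebra.ι ℚ a})

/-!
Let `E_m(z) = (1 + z x_{m-1}) ⋯ (1 + z x_0) = ∑_k z^k e_k(x_0, …, x_{m-1})` for a central
parameter `z`. That `E_m(σ)` and `E_m(τ)` commute is the case `W = []` of an exchange identity,
proved by induction on `m` simultaneously for all strictly decreasing words `W` of letters `≥ m`:
`σ^|W| E_m(τ) W E_m(σ) - τ^|W| E_m(σ) W E_m(τ)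
  = (σ - τ) ∑_{W = UV, U ≠ []} σ^(|U|-1) τ^|V| U E_m(σ) V E_m(τ)`.
The step `m → m + 1` combines the instances `W` and `W x_m` at level `m`; the plactic relations
enter only through moving `x_m` past `E_m(σ)` and past the first letter of a word.
Reading off the coefficient of `σ^k τ^l` in `R[X][X]`, with `σ = C X` and `τ = X`, gives
`e_k e_l = e_l e_k`.
-/

open Finset

lemma Fin.strictAnti_cons {α : Type*} [Preorder α] {n : ℕ} {a : α} {f : Fin n → α} :
    StrictAnti (Fin.cons a f : Fin (n + 1) → α) ↔ (∀ i, f i < a) ∧ StrictAnti f :=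
  Fin.liftFun_cons (· > ·)

section NcEsymm

variable {R : Type*} [Ring R] (x : ℕ → R)

noncomputable def ncEsymm (m k : ℕ) : R :=
  ∑ w ∈ univ.filter (fun w : Fin k → Fin m => StrictAnti w), (List.ofFn fun i => x (w i)).prod

@[simp] lemma ncEsymm_zero_right (m : ℕ) : ncEsymm x m 0 = 1 := by
  rw [ncEsymm, univ_unique, filter_singleton,
    if_pos (show StrictAnti (default : Fin 0 → Fin m) from fun i => i.elim0)]
  simp

@[simp] lemma ncEsymm_zero_succ (k : ℕ) : ncEsymm x 0 (k + 1) = 0 := by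
  simp [ncEsymm]

lemma ncEsymm_eq_sum_ne_last (m k : ℕ) :
    ncEsymm x m k = ∑ w ∈ univ.filter (fun w : Fin k → Fin (m + 1) =>
      StrictAnti w ∧ ∀ i, w i ≠ Fin.last m), (List.ofFn fun i => x (w i)).prod := by
  refine sum_bij' (fun v _ => Fin.castSucc ∘ v)
    (fun w hw i => (w i).castPred ((mem_filter.1 hw).2.2 i)) ?_ ?_ ?_ ?_ ?_
  · intro v hv
    simp only [mem_filter, mem_univ, true_and] at hv ⊢
    exact ⟨Fin.strictMono_castSucc.comp_strictAnti hv, fun i => Fin.castSucc_ne_last _⟩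
  · intro w hw
    simp only [mem_filter, mem_univ, true_and] at hw ⊢
    exact fun i j hij => Fin.castPred_lt_castPred_iff.2 (hw.1 hij)
  · exact fun v _ => rfl
  · exact fun w _ => funext fun i => Fin.castSucc_castPred _ _
  · intro v _
    simp

lemma ncEsymm_succ_succ (m k : ℕ) :
    ncEsymm x (m + 1) (k + 1) = ncEsymm x m (k + 1) + x m * ncEsymm x m k := by
  rw [ncEsymm_eq_sum_ne_last x m (k + 1), ncEsymm_eq_sum_ne_last x m k, ncEsymm, mul_sum,
    ← sum_filter_add_sum_filter_not _ (fun w => w 0 = Fin.last m), add_comm, filter_filter]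
  congr 1
  · refine sum_congr (filter_congr fun w _ => and_congr_right fun hw => ?_) fun _ _ => rfl
    refine ⟨fun h i => ?_, fun h => h 0⟩
    exact (lt_of_le_of_lt (hw.antitone (Fin.zero_le i)) (Fin.lt_last_iff_ne_last.2 h)).ne
  · refine sum_bij' (fun w _ => Fin.tail w) (fun t _ => Fin.cons (Fin.last m) t) ?_ ?_ ?_ ?_ ?_
    · intro w hw
      simp only [mem_filter, mem_univ, true_and] at hw ⊢
      obtain ⟨hanti, hlast⟩ := hw
      rw [← Fin.cons_self_tail w, Fin.strictAnti_cons] at hanti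
      exact ⟨hanti.2, fun i => ((hanti.1 i).trans_eq hlast).ne⟩
    · intro t ht
      simp only [mem_filter, mem_univ, true_and] at ht ⊢
      exact ⟨Fin.strictAnti_cons.2 ⟨fun i => Fin.lt_last_iff_ne_last.2 (ht.2 i), ht.1⟩, rfl⟩
    · intro w hw
      rw [← (mem_filter.1 hw).2, Fin.cons_self_tail]
    · exact fun t _ => Fin.tail_cons _ _
    · intro w hw
      rw [List.ofFn_succ, List.prod_cons, (mem_filter.1 hw).2]
      rfl

lemma ncEsymm_eq_zero_of_lt {m k : ℕ} (h : m < k) : ncEsymm x m k = 0 := by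
  induction m generalizing k with
  | zero =>
    obtain ⟨k, rfl⟩ := Nat.exists_eq_add_one_of_ne_zero h.ne'
    simp
  | succ m ih =>
    obtain ⟨k, rfl⟩ := Nat.exists_eq_add_one_of_ne_zero (Nat.ne_zero_of_lt h)
    rw [ncEsymm_succ_succ, ih (by omega), ih (by omega), mul_zero, add_zero]

lemma map_ncEsymm {S : Type*} [Ring S] (f : R →+* S) (m k : ℕ) :
    f (ncEsymm x m k) = ncEsymm (f ∘ x) m k := by
  simp [ncEsymm, map_list_prod, List.map_ofFn, Function.comp_def]

structure IsPlactic : Prop where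
  acb_eq_cab {a b c : ℕ} : a ≤ b → b < c → x a * x c * x b = x c * x a * x b
  bac_eq_bca {a b c : ℕ} : a < b → b ≤ c → x b * x a * x c = x b * x c * x a

variable {x}

lemma IsPlactic.map {S : Type*} [Ring S] (hx : IsPlactic x) (f : R →+* S) :
    IsPlactic (f ∘ x) where
  acb_eq_cab hab hbc := by simp only [Function.comp_apply, ← map_mul, hx.acb_eq_cab hab hbc]
  bac_eq_bca hab hbc := by simp only [Function.comp_apply, ← map_mul, hx.bac_eq_bca hab hbc]

end NcEsymm

section Exchange

variable {C R : Type*} [CommRing C] [Ring R] [Algebra C R] (x : ℕ → R)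

def ncEsymmGen (z : C) : ℕ → R
  | 0 => 1
  | m + 1 => (1 + z • x m) * ncEsymmGen z m

@[simp] lemma ncEsymmGen_zero (z : C) : ncEsymmGen x z 0 = 1 := rfl

lemma ncEsymmGen_succ (z : C) (m : ℕ) :
    ncEsymmGen x z (m + 1) = ncEsymmGen x z m + z • (x m * ncEsymmGen x z m) := by
  rw [ncEsymmGen, add_mul, one_mul, smul_mul_assoc]

lemma ncEsymmGen_eq_sum (z : C) (m : ℕ) :
    ncEsymmGen x z m = ∑ k ∈ range (m + 1), z ^ k • ncEsymm x m k := by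
  induction m with
  | zero => simp
  | succ m ih =>
    have hshift : ∑ k ∈ range (m + 1), z ^ k • ncEsymm x m k
        = ∑ k ∈ range (m + 1), z ^ (k + 1) • ncEsymm x m (k + 1) + 1 := by
      rw [← add_zero (∑ k ∈ range (m + 1), _), ← smul_zero (z ^ (m + 1)),
        ← ncEsymm_eq_zero_of_lt x (lt_add_one m),
        ← sum_range_succ (fun k => z ^ k • ncEsymm x m k), sum_range_succ', pow_zero, one_smul,
        ncEsymm_zero_right]
    rw [ncEsymmGen_succ, ih, mul_sum, smul_sum, sum_range_succ' _ (m + 1), hshift]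
    simp only [ncEsymm_succ_succ, smul_add, sum_add_distrib, mul_smul_comm, smul_smul, pow_succ',
      pow_zero, one_smul, ncEsymm_zero_right]
    abel

/-- `splitSum x σ τ A B W = ∑_{W = U ++ V, U ≠ []} σ ^ (|U| - 1) τ ^ |V| • U * A * V * B`,
where a word stands for the product of its letters. -/
def splitSum (σ τ : C) (A B : R) : List ℕ → R
  | [] => 0
  | w :: W =>
    τ ^ W.length • (x w * (A * ((W.map x).prod * B))) + σ • (x w * splitSum σ τ A B W)

@[simp] lemma splitSum_nil (σ τ : C) (A B : R) : splitSum x σ τ A B [] = 0 := rfl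

lemma splitSum_cons (σ τ : C) (A B : R) (w : ℕ) (W : List ℕ) :
    splitSum x σ τ A B (w :: W) =
      x w * (τ ^ W.length • (A * ((W.map x).prod * B)) + σ • splitSum x σ τ A B W) := by
  rw [splitSum, mul_add, mul_smul_comm, mul_smul_comm]

lemma sub_smul_splitSum_one (σ τ : C) (W : List ℕ) :
    (σ - τ) • splitSum x σ τ 1 1 W = (σ ^ W.length - τ ^ W.length) • (W.map x).prod := by
  induction W with
  | nil => simp
  | cons w W ih =>
    have h := congrArg (fun y => σ • (x w * y)) ih
    simp only [mul_smul_comm, smul_smul] at h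
    rw [splitSum_cons, List.map_cons, List.prod_cons, List.length_cons, one_mul, mul_one, mul_add,
      mul_smul_comm, smul_add, smul_smul, mul_smul_comm, smul_smul]
    linear_combination (norm := module) h

variable {x}

lemma IsPlactic.mul_ncEsymmGen_mul (hx : IsPlactic x) (z : C) {m b c : ℕ} (hmb : m ≤ b)
    (hbc : b ≤ c) : x b * ncEsymmGen x z m * x c = x b * x c * ncEsymmGen x z m := by
  induction m generalizing b with
  | zero => simp
  | succ m ih =>
    have hstep : x b * (x m * ncEsymmGen x z m) * x c = x b * x c * (x m * ncEsymmGen x z m) :=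
      calc x b * (x m * ncEsymmGen x z m) * x c = x b * (x m * ncEsymmGen x z m * x c) := by
            simp only [mul_assoc]
        _ = x b * x m * x c * ncEsymmGen x z m := by
            rw [ih le_rfl (by omega)]
            simp only [mul_assoc]
        _ = x b * x c * (x m * ncEsymmGen x z m) := by
            rw [hx.bac_eq_bca (by omega) hbc]
            simp only [mul_assoc]
    rw [ncEsymmGen_succ, mul_add, add_mul, mul_add, ih (by omega) hbc, mul_smul_comm,
      smul_mul_assoc, hstep, mul_smul_comm]

lemma IsPlactic.mul_mul_splitSum_comm (hx : IsPlactic x) (σ τ : C) (A B : R) {m w : ℕ}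
    {V : List ℕ} (hV : ∀ b ∈ V.head?, m ≤ b ∧ b < w) :
    x m * (x w * splitSum x σ τ A B V) = x w * (x m * splitSum x σ τ A B V) := by
  cases V with
  | nil => simp
  | cons b V =>
    obtain ⟨hmb, hbw⟩ := hV b rfl
    simp only [splitSum_cons, ← mul_assoc, hx.acb_eq_cab hmb hbw]

lemma IsPlactic.splitSum_add_smul_mul (hx : IsPlactic x) (σ τ : C) {m : ℕ} {A : R}
    (hA : ∀ w, m ≤ w → x m * A * x w = x m * x w * A) (B : R) {W : List ℕ}
    (hW : W.Pairwise (· > ·)) (hWm : ∀ w ∈ W, m < w) :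
    splitSum x σ τ (A + σ • (x m * A)) (B + τ • (x m * B)) W =
      splitSum x σ τ A B W + splitSum x σ τ A B (W ++ [m])
        + τ • (x m * splitSum x σ τ A B W)
        - τ ^ W.length • (x m * (A * ((W.map x).prod * B)))
        + τ • (x m * splitSum x σ τ A B (W ++ [m]))
        - τ ^ (W.length + 1) • (x m * (A * ((W.map x).prod * (x m * B)))) := by
  induction W with
  | nil =>
    have h : x m * (A * (x m * B)) = x m * (x m * (A * B)) := by
      simpa only [mul_assoc] using congrArg (· * B) (hA m le_rfl)
    simp only [splitSum, List.nil_append, List.map_nil, List.prod_nil, List.length_nil, pow_zero,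
      one_smul, pow_one, smul_zero, add_zero, mul_zero, zero_add, one_mul, h]
    abel
  | cons w W ih =>
    rw [List.pairwise_cons] at hW
    have hwW : ∀ b ∈ W, m ≤ b ∧ b < w := fun b hb =>
      ⟨(hWm b (.tail _ hb)).le, hW.1 b hb⟩
    have hmove : ∀ Z, x m * (x w * (A * Z)) = x m * (A * (x w * Z)) := fun Z => by
      rw [← mul_assoc, ← mul_assoc, ← hA w (hWm w (.head _)).le, mul_assoc, mul_assoc]
    have hcomm := hx.mul_mul_splitSum_comm σ τ A B (V := W) fun b hb =>
      hwW b (List.mem_of_mem_head? hb)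
    have hcomm' := hx.mul_mul_splitSum_comm σ τ A B (V := W ++ [m]) fun b hb => by
      rcases List.mem_append.1 (List.mem_of_mem_head? hb) with hb | hb
      · exact hwW b hb
      · rw [List.mem_singleton.1 hb]
        exact ⟨le_rfl, hWm w (.head _)⟩
    rw [List.cons_append, splitSum, ih hW.2 fun b hb => hWm b (.tail _ hb), splitSum, splitSum]
    simp only [List.map_cons, List.prod_cons, List.length_cons, List.length_append, List.map_append,
      List.prod_append, List.map_nil, List.prod_nil, mul_one, List.length_nil, zero_add, mul_add,
      add_mul, smul_add, mul_sub, smul_sub, mul_smul_comm, smul_mul_assoc, smul_smul, mul_assoc]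
    rw [hmove, hmove, hcomm, hcomm']
    module

theorem IsPlactic.ncEsymmGen_exchange (hx : IsPlactic x) (σ τ : C) (m : ℕ) {W : List ℕ}
    (hW : W.Pairwise (· > ·)) (hWm : ∀ w ∈ W, m ≤ w) :
    σ ^ W.length • (ncEsymmGen x τ m * ((W.map x).prod * ncEsymmGen x σ m))
      - τ ^ W.length • (ncEsymmGen x σ m * ((W.map x).prod * ncEsymmGen x τ m))
      = (σ - τ) • splitSum x σ τ (ncEsymmGen x σ m) (ncEsymmGen x τ m) W := by
  induction m generalizing W with
  | zero =>
    simp only [ncEsymmGen_zero, one_mul, mul_one]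
    rw [sub_smul_splitSum_one, sub_smul]
  | succ m ih =>
    have hWm' : ∀ w ∈ W, m ≤ w := fun w hw => Nat.le_of_succ_le (hWm w hw)
    have hWm_append : ∀ w ∈ W ++ [m], m ≤ w := fun w hw =>
      (List.mem_append.1 hw).elim (hWm' w) fun h => (List.mem_singleton.1 h).ge
    have hW_append : (W ++ [m]).Pairwise (· > ·) :=
      List.pairwise_append.2 ⟨hW, by simp, fun a ha b hb => by
        rw [List.mem_singleton.1 hb]
        exact hWm a ha⟩
    have h₁ := ih hW hWm'
    have h₂ := ih hW_append hWm_append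
    have h₃ := congrArg (fun y => τ • (x m * y)) h₁
    have h₄ := congrArg (fun y => τ • (x m * y)) h₂
    rw [ncEsymmGen_succ, ncEsymmGen_succ,
      hx.splitSum_add_smul_mul σ τ (fun w hw => hx.mul_ncEsymmGen_mul σ le_rfl hw) _ hW hWm]
    simp only [List.length_append, List.length_singleton, List.map_append, List.prod_append,
      List.map_cons, List.map_nil, List.prod_cons, List.prod_nil, mul_one, mul_add, add_mul,
      smul_add, mul_sub, smul_sub, mul_smul_comm, smul_mul_assoc, smul_smul, mul_assoc]
      at h₁ h₂ h₃ h₄ ⊢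
    linear_combination (norm := module) h₁ + h₂ + h₃ + h₄

theorem IsPlactic.ncEsymmGen_mul_comm (hx : IsPlactic x) (σ τ : C) (m : ℕ) :
    ncEsymmGen x τ m * ncEsymmGen x σ m = ncEsymmGen x σ m * ncEsymmGen x τ m := by
  simpa [sub_eq_zero] using hx.ncEsymmGen_exchange σ τ m (W := []) .nil (by simp)

end Exchange

open Polynomial in
lemma coeff_sum_X_pow_mul_C {S : Type*} [Semiring S] (a : ℕ → S) {n k : ℕ} (hk : k < n) :
    (∑ i ∈ range n, X ^ i * C (a i)).coeff k = a k := by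
  simp_rw [finsetSum_coeff, X_pow_mul, coeff_C_mul_X_pow]
  simp [hk]

open Polynomial in
theorem IsPlactic.ncEsymm_mul_comm {R : Type*} [Ring R] {x : ℕ → R} (hx : IsPlactic x)
    (m k l : ℕ) : ncEsymm x m k * ncEsymm x m l = ncEsymm x m l * ncEsymm x m k := by
  rcases lt_or_ge m k with hk | hk
  · simp [ncEsymm_eq_zero_of_lt x hk]
  rcases lt_or_ge m l with hl | hl
  · simp [ncEsymm_eq_zero_of_lt x hl]
  let σ : Subring.center R[X][X] := ⟨C X, Subring.mem_center_iff.2 fun p => by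
    ext n : 1
    simp only [coeff_mul_C, coeff_C_mul, (commute_X _).eq]⟩
  let τ : Subring.center R[X][X] :=
    ⟨X, Subring.mem_center_iff.2 fun p => (commute_X p).eq.symm⟩
  set f : R[X] := ∑ i ∈ range (m + 1), X ^ i * C (ncEsymm x m i)
  set g : R[X][X] := ∑ i ∈ range (m + 1), X ^ i * C (C (ncEsymm x m i))
  have hσ : ncEsymmGen ((C.comp C) ∘ x) σ m = C f := by
    rw [ncEsymmGen_eq_sum, map_sum]
    refine sum_congr rfl fun i _ => ?_
    rw [← map_ncEsymm, Subring.smul_def, smul_eq_mul, SubmonoidClass.coe_pow, map_mul, map_pow]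
    rfl
  have hτ : ncEsymmGen ((C.comp C) ∘ x) τ m = g := by
    rw [ncEsymmGen_eq_sum]
    refine sum_congr rfl fun i _ => ?_
    rw [← map_ncEsymm, Subring.smul_def, smul_eq_mul, SubmonoidClass.coe_pow]
    rfl
  have h := congrArg (fun p => (p.coeff l).coeff k)
    ((hx.map (C.comp C)).ncEsymmGen_mul_comm σ τ m)
  simp only [hσ, hτ, coeff_C_mul, coeff_mul_C, g, coeff_sum_X_pow_mul_C _ (Nat.lt_succ_of_le hl)]
    at h
  simpa [f, coeff_sum_X_pow_mul_C _ (Nat.lt_succ_of_le hk), hk] using h.symm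

lemma TwoSidedIdeal.sub_mem_iff_mk'_eq {R : Type*} [Ring R] (I : TwoSidedIdeal R) {a b : R} :
    a - b ∈ I ↔ I.ringCon.mk' a = I.ringCon.mk' b := by
  rw [← sub_eq_zero, ← map_sub, ← mem_ker, ker_ringCon_mk']

/-- The letters `u_i` in `U / I_plac`; extending by `0` for `i ≥ N` keeps the plactic relations
valid for all indices. -/
noncomputable def placticLetter (N i : ℕ) : (Iplac N).ringCon.Quotient :=
  if h : i < N then (Iplac N).ringCon.mk' (FreeAlgebra.ι ℚ ⟨i, h⟩) else 0

lemma isPlactic_placticLetter (N : ℕ) : IsPlactic (placticLetter N) where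
  acb_eq_cab {a b c} hab hbc := by
    by_cases hc : c < N
    · have hb := hbc.trans hc
      simp only [placticLetter, dif_pos hc, dif_pos hb, dif_pos (hab.trans_lt hb), ← map_mul]
      exact (Iplac N).sub_mem_iff_mk'_eq.1 <|
        TwoSidedIdeal.subset_span (.inl ⟨⟨a, _⟩, ⟨b, hb⟩, ⟨c, hc⟩, hab, hbc, rfl⟩)
    · simp [placticLetter, dif_neg hc]
  bac_eq_bca {a b c} hab hbc := by
    by_cases hc : c < N
    · have hb := hbc.trans_lt hc
      simp only [placticLetter, dif_pos hc, dif_pos hb, dif_pos (hab.trans hb), ← map_mul]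
      exact (Iplac N).sub_mem_iff_mk'_eq.1 <|
        TwoSidedIdeal.subset_span (.inr ⟨⟨a, _⟩, ⟨b, hb⟩, ⟨c, hc⟩, hab, hbc, rfl⟩)
    · simp [placticLetter, dif_neg hc]

lemma mk'_eU (N k : ℕ) : (Iplac N).ringCon.mk' (eU N k) = ncEsymm (placticLetter N) N k := by
  rw [eU, map_sum, ncEsymm]
  refine sum_congr (by ext w; simp only [mem_filter, mem_univ, true_and]; rfl) fun w _ => ?_
  rw [map_list_prod, List.map_ofFn]
  congr 1
  exact List.ofFn_inj.2 (funext fun i => by simp [placticLetter])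

theorem stmt13_general (N : ℕ) (k l : ℕ) :
    eU N k * eU N l - eU N l * eU N k ∈ Iplac N := by
  rw [TwoSidedIdeal.sub_mem_iff_mk'_eq, map_mul, map_mul, mk'_eU, mk'_eU]
  exact (isPlactic_placticLetter N).ncEsymm_mul_comm N k l

/-- the plactic ideal satisfies the commutation relation
`e_k(u) e_ℓ(u) ≡ e_ℓ(u) e_k(u) mod I_plac`. -/
theorem stmt13 (N : ℕ) (k l : ℕ) (hk : 1 ≤ k) (hl : 1 ≤ l) :
    eU N k * eU N l - eU N l * eU N k ∈ Iplac N :=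
  stmt13_general N k l
end

section
/- For any semistandard Young tableau T, the RSK insertion tableau of its column reading word equals T: P(col(T)) = T. -/
/-!
By induction on `n`, inserting the first `n` columns of `T` produces the truncation of `T` to
its first `n` columns. Insert column `n`, read bottom to top, into that truncation: its bottom
entry dominates the whole first row and is appended to it, and every later, smaller entry bumps
the entry just placed at the end of the first row into the rows below. Induction on the length
of the column then shows that each row gets its own column entry appended, which is the
truncation to `n + 1` columns.
-/

open scoped Classical

section RSK

variable {α : Type*} [LinearOrder α]

/-- Insert `x` into a row: bump the leftmost entry strictly greater than `x`,
or append `x` at the end if there is none. Returns the new row and the bumped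
entry (if any). -/
def bumpRow : List α → α → List α × Option α
  | [], x => ([x], none)
  | a :: as, x =>
      if a ≤ x then
        let r := bumpRow as x
        (a :: r.1, r.2)
      else (x :: as, some a)

/-- RSK row insertion of a letter into a tableau (given as its list of rows). -/
def insertTab : List (List α) → α → List (List α)
  | [], x => [[x]]
  | r :: rest, x =>
      match bumpRow r x with
      | (r', none) => r' :: rest
      | (r', some y) => r' :: insertTab rest y

/-- The RSK insertion tableau `P(w)` of a word `w`. -/
def RSKP (w : List α) : List (List α) := w.foldl insertTab []

/-- Semistandard Young tableaux, encoded as lists of rows: rows are nonempty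
and weakly increasing, row lengths are weakly decreasing, and columns are
strictly increasing. -/
def IsSSYT (T : List (List α)) : Prop :=
  (∀ r ∈ T, r ≠ []) ∧
  (T.map List.length).Pairwise (· ≥ ·) ∧
  (∀ r ∈ T, r.Pairwise (· ≤ ·)) ∧
  ∀ (i j c : ℕ) (hi : i < T.length) (hj : j < T.length), i < j →
    ∀ (hc : c < (T.get ⟨j, hj⟩).length) (hc' : c < (T.get ⟨i, hi⟩).length),
      (T.get ⟨i, hi⟩).get ⟨c, hc'⟩ < (T.get ⟨j, hj⟩).get ⟨c, hc⟩

/-- The column reading word of a tableau: read each column bottom to top,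
columns left to right. -/
def colWord (T : List (List α)) : List α :=
  (List.range ((T.headD []).length)).flatMap fun c =>
    T.reverse.filterMap fun r => r[c]?

end RSK

section Tableaux

variable {α : Type*}

def appendCol : List (List α) → List α → List (List α)
  | S, [] => S
  | S, x :: col => (S.headD [] ++ [x]) :: appendCol S.tail col

def column (n : ℕ) (T : List (List α)) : List α :=
  T.filterMap (·[n]?)

lemma colWord_eq_flatMap_column (T : List (List α)) :
    colWord T = (List.range (T.headD []).length).flatMap fun n => (column n T).reverse := by
  simp [colWord, column, List.filterMap_reverse]

lemma column_cons_of_lt {n : ℕ} {r : List α} (rest : List (List α)) (h : n < r.length) :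
    column n (r :: rest) = r[n] :: column n rest := by
  simp [column, List.getElem?_eq_getElem h]

lemma column_eq_nil {n : ℕ} {T : List (List α)} (h : ∀ r ∈ T, r.length ≤ n) :
    column n T = [] :=
  List.filterMap_eq_nil_iff.2 fun r hr => List.getElem?_eq_none (h r hr)

lemma length_le_of_length_head_le {r : List α} {rest : List (List α)} {n : ℕ}
    (hlen : ((r :: rest).map List.length).Pairwise (· ≥ ·)) (hr : r.length ≤ n) :
    ∀ s ∈ r :: rest, s.length ≤ n := by
  rintro s (_ | ⟨_, hs⟩)
  · exact hr
  · exact ((List.pairwise_cons.1 hlen).1 s.length (List.mem_map_of_mem hs)).trans hr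

variable {T : List (List α)}

lemma appendCol_map_take_column (hlen : (T.map List.length).Pairwise (· ≥ ·)) (n : ℕ) :
    appendCol (T.map (List.take n)) (column n T) = T.map (List.take (n + 1)) := by
  induction T with
  | nil => rfl
  | cons r rest ih =>
    by_cases hr : n < r.length
    · rw [column_cons_of_lt rest hr]
      simp only [appendCol, List.map_cons, List.headD_cons, List.tail_cons, ih hlen.of_cons,
        List.take_add_one (l := r), List.getElem?_eq_getElem hr, Option.toList_some]
    · have hshort := length_le_of_length_head_le hlen (not_lt.1 hr)
      rw [column_eq_nil hshort, appendCol]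
      exact List.map_congr_left fun s hs => by
        rw [List.take_of_length_le (hshort s hs), List.take_of_length_le (hshort s hs).step]

lemma appendCol_nil_column_zero (hne : ∀ r ∈ T, r ≠ []) :
    appendCol [] (column 0 T) = T.map (List.take 1) := by
  induction T with
  | nil => rfl
  | cons r rest ih =>
    obtain ⟨a, r, rfl⟩ := List.exists_cons_of_ne_nil (hne _ List.mem_cons_self)
    simp [column_cons_of_lt rest (by simp : 0 < (a :: r).length), appendCol,
      ← ih fun s hs => hne s (by simp [hs])]

lemma map_take_headD_length (hlen : (T.map List.length).Pairwise (· ≥ ·)) :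
    T.map (List.take (T.headD []).length) = T := by
  cases T with
  | nil => rfl
  | cons r rest =>
    conv_rhs => rw [← List.map_id (r :: rest)]
    exact List.map_congr_left fun s hs =>
      List.take_of_length_le (length_le_of_length_head_le hlen le_rfl s hs)

end Tableaux

section Insertion

variable {α : Type*} [LinearOrder α]

lemma bumpRow_of_forall_le {r : List α} {x : α} (h : ∀ a ∈ r, a ≤ x) :
    bumpRow r x = (r ++ [x], none) := by
  induction r with
  | nil => rfl
  | cons a r ih =>
    simp only [List.mem_cons, forall_eq_or_imp] at h
    simp [bumpRow, h.1, ih h.2]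

lemma bumpRow_append_of_lt {r : List α} {x z : α} (h : ∀ a ∈ r, a ≤ x) (hxz : x < z) :
    bumpRow (r ++ [z]) x = (r ++ [x], some z) := by
  induction r with
  | nil => simp [bumpRow, hxz]
  | cons a r ih =>
    simp only [List.mem_cons, forall_eq_or_imp] at h
    simp [bumpRow, h.1, ih h.2]

lemma insertTab_of_forall_le {S : List (List α)} {x : α} (h : ∀ a ∈ S.headD [], a ≤ x) :
    insertTab S x = (S.headD [] ++ [x]) :: S.tail := by
  cases S with
  | nil => rfl
  | cons r rest => simp [insertTab, bumpRow_of_forall_le (r := r) h]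

lemma insertTab_append_of_lt {r : List α} {rest : List (List α)} {x z : α}
    (h : ∀ a ∈ r, a ≤ x) (hxz : x < z) :
    insertTab ((r ++ [z]) :: rest) x = (r ++ [x]) :: insertTab rest z := by
  simp [insertTab, bumpRow_append_of_lt h hxz]

lemma foldl_insertTab_bump_chain {r : List α} {rest : List (List α)} {w : List α} {x z : α}
    (hw : (z :: (w ++ [x])).Pairwise (· > ·)) (hr : ∀ a ∈ r, a ≤ x) :
    (w ++ [x]).foldl insertTab ((r ++ [z]) :: rest) =
      (r ++ [x]) :: (z :: w).foldl insertTab rest := by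
  induction w generalizing z rest with
  | nil =>
    have hxz : x < z := List.rel_of_pairwise_cons hw (by simp)
    simp [insertTab_append_of_lt hr hxz]
  | cons y w ih =>
    have hyz : y < z := List.rel_of_pairwise_cons hw (by simp)
    have hxy : x < y := List.rel_of_pairwise_cons hw.of_cons (by simp)
    simp only [List.cons_append, List.foldl_cons,
      insertTab_append_of_lt (fun a ha => (hr a ha).trans hxy.le) hyz]
    exact ih hw.of_cons

lemma foldl_insertTab_append_singleton {S : List (List α)} {w : List α} {x : α}
    (hw : (w ++ [x]).Pairwise (· > ·)) (hS : ∀ a ∈ S.headD [], a ≤ x) :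
    (w ++ [x]).foldl insertTab S = (S.headD [] ++ [x]) :: w.foldl insertTab S.tail := by
  cases w with
  | nil => simp [insertTab_of_forall_le hS]
  | cons y w =>
    have hxy : x < y := List.rel_of_pairwise_cons hw (by simp)
    simp only [List.cons_append, List.foldl_cons,
      insertTab_of_forall_le (fun a ha => (hS a ha).trans hxy.le)]
    exact foldl_insertTab_bump_chain hw hS

lemma foldl_insertTab_reverse {S : List (List α)} {col : List α} (hc : col.Pairwise (· < ·))
    (hS : ∀ i (hi : i < col.length), ∀ a ∈ S.getD i [], a ≤ col[i]) :
    col.reverse.foldl insertTab S = appendCol S col := by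
  induction col generalizing S with
  | nil => rfl
  | cons x col ih =>
    have hrev : (col.reverse ++ [x]).Pairwise (· > ·) := by
      rw [← List.reverse_cons, List.pairwise_reverse]
      exact hc
    have hhead : ∀ a ∈ S.headD [], a ≤ x := by
      cases S <;> exact hS 0 (by simp)
    have htail : ∀ i (hi : i < col.length), ∀ a ∈ S.tail.getD i [], a ≤ col[i] := by
      intro i hi
      cases S <;> exact hS (i + 1) (by simpa using hi)
    rw [List.reverse_cons, foldl_insertTab_append_singleton hrev hhead, ih hc.of_cons htail]
    rfl

lemma column_pairwise_lt {T : List (List α)} (hT : IsSSYT T) (n : ℕ) :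
    (column n T).Pairwise (· < ·) := by
  obtain ⟨-, -, -, hcol⟩ := hT
  rw [column, List.pairwise_filterMap, List.pairwise_iff_getElem]
  intro i j hi hj hij a ha b hb
  obtain ⟨hni, rfl⟩ := List.getElem?_eq_some_iff.1 ha
  obtain ⟨hnj, rfl⟩ := List.getElem?_eq_some_iff.1 hb
  exact hcol i j n hi hj hij hnj hni

variable {T : List (List α)}

lemma le_column_getElem (hlen : (T.map List.length).Pairwise (· ≥ ·))
    (hrow : ∀ r ∈ T, r.Pairwise (· ≤ ·)) (n : ℕ) :
    ∀ i (hi : i < (column n T).length), ∀ a ∈ (T.map (List.take n)).getD i [],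
      a ≤ (column n T)[i] := by
  induction T with
  | nil => simp [column]
  | cons r rest ih =>
    by_cases hr : n < r.length
    · simp only [column_cons_of_lt rest hr]
      rintro (_ | i) hi a ha
      · have hsub : (r.take n ++ [r[n]]).Sublist r := by
          rw [← List.concat_eq_append, List.take_concat_get]
          exact List.take_sublist _ _
        exact (List.pairwise_append.1 ((hrow r List.mem_cons_self).sublist hsub)).2.2 a
          (by simpa using ha) r[n] (List.mem_singleton_self _)
      · exact ih hlen.of_cons (fun s hs => hrow s (by simp [hs])) i _ a (by simpa using ha)
    · simp [column_eq_nil (length_le_of_length_head_le hlen (not_lt.1 hr))]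

lemma RSKP_flatMap_range_column (hT : IsSSYT T) (k : ℕ) :
    RSKP ((List.range (k + 1)).flatMap fun n => (column n T).reverse) =
      T.map (List.take (k + 1)) := by
  obtain ⟨hne, hlen, hrow, -⟩ := id hT
  induction k with
  | zero =>
    rw [List.range_one, List.flatMap_singleton, RSKP,
      foldl_insertTab_reverse (column_pairwise_lt hT 0) fun _ _ _ ha => by simp at ha,
      appendCol_nil_column_zero hne]
  | succ k ih =>
    rw [List.range_succ, List.flatMap_append, RSKP, List.foldl_append, ← RSKP, ih,
      List.flatMap_singleton,
      foldl_insertTab_reverse (column_pairwise_lt hT _) (le_column_getElem hlen hrow _),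
      appendCol_map_take_column hlen]

end Insertion

/-- for a semistandard Young tableau `T`, the RSK insertion
tableau of its column reading word is `T` itself. -/
theorem stmt15 (T : List (List ℕ)) (hT : IsSSYT T) : RSKP (colWord T) = T := by
  obtain ⟨hne, hlen, -, -⟩ := id hT
  rcases T with _ | ⟨r, rest⟩
  · rfl
  obtain ⟨k, hk⟩ := Nat.exists_eq_add_one_of_ne_zero
    (List.length_pos_iff.2 (hne r List.mem_cons_self)).ne'
  conv_rhs => rw [← map_take_headD_length hlen]
  rw [colWord_eq_flatMap_column, List.headD_cons, hk, RSKP_flatMap_range_column hT]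
end
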